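/- arXiv:2007.13901 — 5 statements merged into one kernel-verified Lean document; each statement's English description precedes it below -/
import Mathlib

section
/- A digraph D of order n with at least one source vertex has a closed dominating walk if and only if D has exactly one source vertex v and v has out-degree n-1. -/
variable {V : Type*}

/-- `S` dominates the digraph with arc relation `A`: every vertex is in `S`
or has an in-neighbour in `S`. -/
def Dom (A : V → V → Prop) (S : Set V) : Prop :=
  ∀ v, v ∈ S ∨ ∃ u ∈ S, A u v

/-- `l` (a nonempty list of visited vertices) is a closed directed walk:
consecutive vertices are joined by arcs and there is an arc from the last
vertex back to the first (or the walk is the trivial walk at one vertex). -/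
def IsClosedWalk (A : V → V → Prop) (l : List V) : Prop :=
  l ≠ [] ∧ l.Chain' A ∧
    (l.length = 1 ∨ ∀ a b, l.head? = some a → l.getLast? = some b → A b a)

/-- The length (number of arcs, with multiplicity) of the closed walk with
vertex list `l`. -/
def walkLength (l : List V) : ℕ := if l.length = 1 then 0 else l.length

/-- `l` is a closed dominating walk. -/
def IsCDW (A : V → V → Prop) (l : List V) : Prop :=
  IsClosedWalk A l ∧ Dom A {v | v ∈ l}

/-- The digraph has a closed dominating walk. -/
def HasCDW (A : V → V → Prop) : Prop := ∃ l, IsCDW A l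

/-- The watchman number: minimum length of a closed dominating walk. -/
noncomputable def watchman (A : V → V → Prop) : ℕ :=
  sInf {n | ∃ l, IsCDW A l ∧ walkLength l = n}

/-- A tournament: loopless, and exactly one arc between any two distinct vertices. -/
def IsTournament (A : V → V → Prop) : Prop :=
  (∀ v, ¬ A v v) ∧ ∀ u v : V, u ≠ v → (A u v ↔ ¬ A v u)

/-- The subdigraph induced on `S` is strongly connected. -/
def StronglyConnectedOn (A : V → V → Prop) (S : Set V) : Prop :=
  ∀ u ∈ S, ∀ v ∈ S, Relation.ReflTransGen (fun a b => a ∈ S ∧ b ∈ S ∧ A a b) u v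

/-- The maximal strongly connected component containing `v`. -/
def StrongComp (A : V → V → Prop) (v : V) : Set V :=
  {u | Relation.ReflTransGen A v u ∧ Relation.ReflTransGen A u v}

/-- The domination number. -/
noncomputable def domNum (A : V → V → Prop) : ℕ :=
  sInf {n | ∃ S : Set V, S.ncard = n ∧ Dom A S}

/-- The total domination number. -/
noncomputable def totalDomNum (A : V → V → Prop) : ℕ :=
  sInf {n | ∃ S : Set V, S.ncard = n ∧ ∀ v, ∃ u ∈ S, u ≠ v ∧ A u v}

/-- An orientation of a complete multipartite graph whose parts are the fibres
of `P`: arcs only between different parts, and exactly one arc between any two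
vertices in different parts. -/
def IsCMPOrientation {ι : Type*} (A : V → V → Prop) (P : V → ι) : Prop :=
  (∀ u v, A u v → P u ≠ P v) ∧ ∀ u v, P u ≠ P v → (A u v ↔ ¬ A v u)

/-!
On a closed walk of length at least two every vertex has a predecessor on the walk, so a closed
walk through a source is the trivial walk at that source. A source `v` can only be dominated by
itself, so a closed dominating walk exists iff `{v}` dominates, i.e. `v` has an arc to every
other vertex.
-/

theorem IsClosedWalk.exists_adj_of_mem {A : V → V → Prop} {l : List V} (hl : IsClosedWalk A l)
    (hlen : l.length ≠ 1) {v : V} (hv : v ∈ l) : ∃ u ∈ l, A u v := by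
  obtain ⟨hne, hchain, hclose⟩ := hl
  have hclose := hclose.resolve_left hlen
  obtain ⟨s, t, rfl⟩ := List.mem_iff_append.mp hv
  rcases List.eq_nil_or_concat s with rfl | ⟨s, u, rfl⟩
  · exact ⟨_, List.getLast_mem hne, hclose _ _ rfl (List.getLast?_eq_some_getLast hne)⟩
  · rw [List.concat_eq_append, List.append_assoc, List.singleton_append] at hchain
    exact ⟨u, by simp, (List.isChain_append_cons_cons.mp hchain).2.1⟩

theorem IsClosedWalk.eq_singleton_of_source_mem {A : V → V → Prop} {l : List V}
    (hl : IsClosedWalk A l) {v : V} (hv : ∀ u, ¬ A u v) (hvl : v ∈ l) : l = [v] := by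
  by_cases hlen : l.length = 1
  · obtain ⟨w, rfl⟩ := List.length_eq_one_iff.mp hlen
    rw [List.mem_singleton.mp hvl]
  · obtain ⟨u, -, huv⟩ := hl.exists_adj_of_mem hlen hvl
    exact (hv u huv).elim

theorem dom_singleton_iff {A : V → V → Prop} {v : V} :
    Dom A {v} ↔ ∀ u, u ≠ v → A v u := by
  simp only [Dom, Set.mem_singleton_iff, exists_eq_left]
  exact forall_congr' fun u => or_iff_not_imp_left

theorem hasCDW_iff_dom_singleton_of_source {A : V → V → Prop} {v : V} (hv : ∀ u, ¬ A u v) :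
    HasCDW A ↔ Dom A {v} := by
  constructor
  · rintro ⟨l, hwalk, hdom⟩
    have hvl : v ∈ l := (hdom v).resolve_right fun ⟨u, _, huv⟩ => hv u huv
    simpa [hwalk.eq_singleton_of_source_mem hv hvl] using hdom
  · intro hdom
    exact ⟨[v], ⟨List.cons_ne_nil v [], List.isChain_singleton v, Or.inl rfl⟩, by simpa using hdom⟩

theorem ncard_setOf_adj_eq_card_sub_one_iff [Fintype V] {A : V → V → Prop} {v : V}
    (hv : ¬ A v v) : {u | A v u}.ncard = Fintype.card V - 1 ↔ ∀ u, u ≠ v → A v u := by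
  have hsub : {u | A v u} ⊆ {v}ᶜ := fun u hu (huv : u = v) => hv (huv ▸ hu)
  have hcompl : ({v}ᶜ : Set V).ncard = Fintype.card V - 1 := by
    rw [Set.ncard_compl, Set.ncard_singleton, Nat.card_eq_fintype_card]
  rw [← hcompl]
  constructor
  · intro hcard u hu
    exact (Set.eq_of_subset_of_ncard_le hsub hcard.ge).superset hu
  · intro hall
    exact congrArg Set.ncard (hsub.antisymm hall)

theorem stmt1 [Fintype V] (A : V → V → Prop)
    (hsrc : ∃ v : V, ∀ u, ¬ A u v) :
    HasCDW A ↔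
      ∃ v : V, (∀ u, ¬ A u v) ∧ (∀ w, (∀ u, ¬ A u w) → w = v) ∧
        {u | A v u}.ncard = Fintype.card V - 1 := by
  obtain ⟨v, hv⟩ := hsrc
  rw [hasCDW_iff_dom_singleton_of_source hv, dom_singleton_iff]
  constructor
  · intro hout
    refine ⟨v, hv, fun w hw => ?_, (ncard_setOf_adj_eq_card_sub_one_iff (hv v)).mpr hout⟩
    by_contra hwv
    exact hw v (hout w hwv)
  · rintro ⟨w, hw, hunique, hcard⟩
    obtain rfl := hunique v hv
    exact (ncard_setOf_adj_eq_card_sub_one_iff (hw v)).mp hcard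
end

section
/- Let D be an orientation of a complete bipartite graph with parts A and B such that every vertex has in-degree at least 1. If there exists U ⊆ B such that the subdigraph induced by A ∪ U is strongly connected, then D has a closed dominating walk. -/
variable {V : Type*}

/-! Every vertex of `B` has an in-neighbour, which must lie in `A`; so `A`, and with it `A ∪ U`,
dominates `D`. A finite strongly connected vertex set is covered by a single closed walk: from a
base vertex, concatenate a round trip to each vertex of the set. That walk is dominating. -/

open List Relation

section Walks

variable {r : V → V → Prop}

theorem List.IsChain.cons_append_of_getLast_eq {a b : V} {l₁ l₂ : List V}
    (h₁ : (a :: l₁).IsChain r) (hb : (a :: l₁).getLast (cons_ne_nil a l₁) = b)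
    (h₂ : (b :: l₂).IsChain r) : (a :: (l₁ ++ l₂)).IsChain r := by
  induction l₁ generalizing a with
  | nil => simp_all
  | cons c l₁ ih =>
    rw [isChain_cons_cons] at h₁
    exact .cons_cons h₁.1 (ih h₁.2 (by simpa using hb))

theorem List.getLast_cons_append_of_getLast_eq {a b : V} {l₁ l₂ : List V}
    (hb : (a :: l₁).getLast (cons_ne_nil a l₁) = b) :
    (a :: (l₁ ++ l₂)).getLast (cons_ne_nil _ _) = (b :: l₂).getLast (cons_ne_nil b l₂) := by
  induction l₁ generalizing a with
  | nil => simp_all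
  | cons c l₁ ih => simpa using ih (by simpa using hb)

theorem exists_isChain_cons_getLast_eq_self_forall_mem {s : V} (T : List V)
    (hT : ∀ x ∈ T, ReflTransGen r s x ∧ ReflTransGen r x s) :
    ∃ l, (s :: l).IsChain r ∧ (s :: l).getLast (cons_ne_nil s l) = s ∧ ∀ x ∈ T, x ∈ s :: l := by
  induction T with
  | nil => exact ⟨[], .singleton s, rfl, by simp⟩
  | cons x T ih =>
    obtain ⟨l, hl, hlast, hmem⟩ := ih fun y hy => hT y (mem_cons_of_mem x hy)
    obtain ⟨p, hp, hplast⟩ := exists_isChain_cons_of_relationReflTransGen (hT x mem_cons_self).1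
    obtain ⟨q, hq, hqlast⟩ := exists_isChain_cons_of_relationReflTransGen (hT x mem_cons_self).2
    refine ⟨p ++ (q ++ l), hp.cons_append_of_getLast_eq hplast
      (hq.cons_append_of_getLast_eq hqlast hl), ?_, ?_⟩
    · rw [getLast_cons_append_of_getLast_eq hplast, getLast_cons_append_of_getLast_eq hqlast, hlast]
    · have hx : x ∈ s :: p := hplast ▸ getLast_mem _
      grind

theorem isClosedWalk_cons_of_isChain_append {s : V} {L : List V} (h : (s :: L ++ [s]).IsChain r) :
    IsClosedWalk r (s :: L) := by
  refine ⟨cons_ne_nil s L, h.left_of_append, Or.inr fun a b ha hb => ?_⟩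
  obtain rfl : s = a := by simpa using ha
  exact (isChain_append.1 h).2.2 b hb s rfl

theorem exists_isClosedWalk_forall_mem {s : V} (T : List V)
    (hT : ∀ x ∈ T, ReflTransGen r s x ∧ ReflTransGen r x s) :
    ∃ c, IsClosedWalk r c ∧ ∀ x ∈ T, x ∈ c := by
  obtain ⟨l, hl, hlast, hmem⟩ := exists_isChain_cons_getLast_eq_self_forall_mem T hT
  rcases l.eq_nil_or_concat with rfl | ⟨L, b, rfl⟩
  · exact ⟨[s], ⟨cons_ne_nil s [], .singleton s, Or.inl rfl⟩, hmem⟩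
  · obtain rfl : s = b := by simpa using hlast.symm
    rw [concat_eq_append] at hl hmem
    exact ⟨s :: L, isClosedWalk_cons_of_isChain_append hl, fun x hx => by grind⟩

end Walks

theorem IsClosedWalk.mono {r r' : V → V → Prop} (h : ∀ ⦃a b⦄, r a b → r' a b) {c : List V}
    (hc : IsClosedWalk r c) : IsClosedWalk r' c :=
  ⟨hc.1, hc.2.1.imp h, hc.2.2.imp id fun hcl a b ha hb => h (hcl a b ha hb)⟩

theorem StronglyConnectedOn.exists_isClosedWalk_superset {A : V → V → Prop} {S : Set V}
    (hsc : StronglyConnectedOn A S) (hfin : S.Finite) (hne : S.Nonempty) :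
    ∃ c, IsClosedWalk A c ∧ S ⊆ {v | v ∈ c} := by
  obtain ⟨s, hs⟩ := hne
  obtain ⟨c, hc, hmem⟩ := exists_isClosedWalk_forall_mem hfin.toFinset.toList fun x hx => by
    rw [Finset.mem_toList, Set.Finite.mem_toFinset] at hx
    exact ⟨hsc s hs x hx, hsc x hx s hs⟩
  exact ⟨c, hc.mono fun _ _ h => h.2.2, fun x hx => hmem x (by simpa using hx)⟩

theorem Dom.mono {A : V → V → Prop} {S T : Set V} (h : Dom A S) (hST : S ⊆ T) : Dom A T :=
  fun v => (h v).imp (@hST v) fun ⟨u, hu, huv⟩ => ⟨u, hST hu, huv⟩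

theorem Dom.nonempty [Nonempty V] {A : V → V → Prop} {S : Set V} (h : Dom A S) : S.Nonempty := by
  obtain ⟨v⟩ := ‹Nonempty V›
  rcases h v with hv | ⟨u, hu, -⟩
  exacts [⟨v, hv⟩, ⟨u, hu⟩]

theorem hasCDW_of_stronglyConnectedOn_of_dom [Nonempty V] {A : V → V → Prop} {S : Set V}
    (hfin : S.Finite) (hsc : StronglyConnectedOn A S) (hdom : Dom A S) : HasCDW A := by
  obtain ⟨c, hc, hSc⟩ := hsc.exists_isClosedWalk_superset hfin hdom.nonempty
  exact ⟨c, hc, hdom.mono hSc⟩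

theorem IsCMPOrientation.dom_fiber {A : V → V → Prop} {P : V → Bool}
    (hor : IsCMPOrientation A P) (hin : ∀ v, ∃ u, A u v) (b : Bool) : Dom A {v | P v = b} := by
  intro v
  by_cases hv : P v = b
  · exact Or.inl hv
  obtain ⟨u, hu⟩ := hin v
  have hPu : P u ≠ P v := hor.1 u v hu
  refine Or.inr ⟨u, ?_, hu⟩
  change P u = b
  revert hv hPu
  cases P u <;> cases P v <;> cases b <;> decide

theorem stmt3_general [Fintype V] [Nonempty V] (Arc : V → V → Prop) (P : V → Bool)
    (hor : IsCMPOrientation Arc P) (hin : ∀ v, ∃ u, Arc u v)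
    (U : Set V)
    (hsc : StronglyConnectedOn Arc ({v | P v = true} ∪ U)) :
    HasCDW Arc :=
  hasCDW_of_stronglyConnectedOn_of_dom (Set.toFinite _) hsc
    ((hor.dom_fiber hin true).mono Set.subset_union_left)

theorem stmt3 [Fintype V] [Nonempty V] (Arc : V → V → Prop) (P : V → Bool)
    (hor : IsCMPOrientation Arc P) (hin : ∀ v, ∃ u, Arc u v)
    (U : Set V) (hU : U ⊆ {v | P v = false})
    (hsc : StronglyConnectedOn Arc ({v | P v = true} ∪ U)) :
    HasCDW Arc :=
  stmt3_general Arc P hor hin U hsc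
end

section
/- Let D be an orientation of a complete bipartite graph with parts A and B, |A| ≤ |B|, such that every vertex has in-degree at least 1. If there exists U ⊆ B such that every vertex of A is dominated by exactly one vertex of U, then D has a closed dominating walk of length at most 2|A|. -/
/-!
Write `A`, `B` for the parts `P = true`, `P = false`, `N⁻(v)` for the in-neighbourhood of `v`, and
let `f a ∈ U` be the unique vertex of `U` dominating `a ∈ A`. Choose `R ⊆ A` minimal such that
every `w ∈ A` is matched by some `x ∈ R` with `f x = f w` and `N⁻(x) ⊆ N⁻(w)`. By minimality, two
vertices `x ≠ y` of `R` with `f x = f y` have incomparable in-neighbourhoods, so `x → b → y` for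
some `b ∈ B`.

The walk visits every `u ∈ f(R)` followed by the vertices of `R` that `u` dominates, linked by such
`b`s; a vertex `x ∈ R` has an arc to every other `u' ∈ U`, since `u'` does not dominate it. There
are at least two such `u`, because an in-neighbour `w ∈ A` of `u` is not dominated by `u`. The walk
has length `2|R| ≤ 2|A|` and dominates `A` through the vertices `u`. A vertex `b ∈ B` has an
in-neighbour `w ∈ A`; the vertex `x ∈ R` matching `w` satisfies `b ∉ N⁻(w) ⊇ N⁻(x)`, so `x → b`.
-/

variable {V : Type*}

namespace List

variable {α : Type*} (c : α → α → α)

def interpose : List α → List α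
  | [] => []
  | [x] => [x]
  | x :: y :: l => x :: c x y :: interpose (y :: l)

theorem head?_interpose : ∀ l : List α, (interpose c l).head? = l.head?
  | [] | [_] | _ :: _ :: _ => rfl

theorem getLast?_interpose : ∀ l : List α, (interpose c l).getLast? = l.getLast?
  | [] | [_] => rfl
  | x :: y :: l => by
    have h := getLast?_interpose (y :: l)
    simp only [interpose, getLast?_cons, h, Option.getD_some]

theorem subset_interpose : ∀ l : List α, l ⊆ interpose c l
  | [] | [_] => Subset.refl _
  | x :: y :: l =>
    cons_subset_cons x (Subset.trans (subset_interpose (y :: l)) (subset_cons_self _ _))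

theorem length_interpose : ∀ l : List α, (interpose c l).length = 2 * l.length - 1
  | [] | [_] => rfl
  | x :: y :: l => by
    simp only [interpose, length_cons, length_interpose (y :: l)]
    omega

theorem isChain_interpose {r : α → α → Prop} :
    ∀ {l : List α}, l.IsChain (fun x y => r x (c x y) ∧ r (c x y) y) →
      (interpose c l).IsChain r
  | [], _ | [_], _ => by simp [interpose]
  | x :: y :: l, h => by
    rw [isChain_cons_cons] at h
    have ih := isChain_interpose h.2
    rw [interpose, isChain_cons_cons, isChain_cons]
    refine ⟨h.1.1, fun z hz => ?_, ih⟩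
    rw [head?_interpose, head?_cons, Option.mem_some_iff] at hz
    exact hz ▸ h.1.2

end List

theorem Finset.exists_subset_isAntichain_covering {α : Type*} {r : α → α → Prop}
    (hrefl : ∀ a, r a a) (htrans : ∀ a b c, r a b → r b c → r a c) (s : Finset α) :
    ∃ t ⊆ s, (∀ a ∈ s, ∃ b ∈ t, r b a) ∧ IsAntichain r (t : Set α) := by
  classical
  obtain ⟨t, hts, hmin⟩ := exists_minimal_le_of_wellFoundedLT
    (fun t : Finset α => ∀ a ∈ s, ∃ b ∈ t, r b a) s fun a ha => ⟨a, ha, hrefl a⟩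
  refine ⟨t, hts, hmin.prop, fun x hx y hy hxy hrxy => ?_⟩
  have hcover : ∀ a ∈ s, ∃ b ∈ t.erase y, r b a := fun a ha => by
    obtain ⟨b, hb, hba⟩ := hmin.prop a ha
    by_cases hby : b = y
    · exact ⟨x, mem_erase.2 ⟨hxy, hx⟩, htrans x y a hrxy (hby ▸ hba)⟩
    · exact ⟨b, mem_erase.2 ⟨hby, hb⟩, hba⟩
  exact notMem_erase y t (hmin.le_of_le hcover (erase_subset y t) hy)

section HubWalk

open List

variable {Arc : V → V → Prop} (c : V → V → V) (L : V → List V)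

def hubWalk (us : List V) : List V :=
  us.flatMap fun u => u :: (L u).interpose c

theorem mem_hubWalk {us : List V} {u : V} (hu : u ∈ us) : u ∈ hubWalk c L us :=
  mem_flatMap.2 ⟨u, hu, mem_cons_self⟩

theorem mem_hubWalk_of_mem {us : List V} {u x : V} (hu : u ∈ us) (hx : x ∈ L u) :
    x ∈ hubWalk c L us :=
  mem_flatMap.2 ⟨u, hu, mem_cons_of_mem _ (subset_interpose c _ hx)⟩

theorem length_hubWalk : ∀ {us : List V}, (∀ u ∈ us, L u ≠ []) →
    (hubWalk c L us).length = 2 * (us.map fun u => (L u).length).sum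
  | [], _ => rfl
  | u :: us, hne => by
    have ih := length_hubWalk fun v hv => hne v (mem_cons_of_mem u hv)
    have hu : (L u).length ≠ 0 := by simpa using hne u mem_cons_self
    rw [hubWalk, flatMap_cons, length_append, ← hubWalk, ih]
    simp only [length_cons, length_interpose, map_cons, sum_cons]
    omega

theorem head?_hubWalk_append (us : List V) (v : V) :
    (hubWalk c L us ++ [v]).head? = (us ++ [v]).head? := by
  cases us <;> simp [hubWalk]

theorem isChain_hubWalk_append {S : Set V} (hne : ∀ u ∈ S, L u ≠ [])
    (hout : ∀ u ∈ S, ∀ x ∈ L u, Arc u x)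
    (hback : ∀ u ∈ S, ∀ x ∈ L u, ∀ u' ∈ S, u ≠ u' → Arc x u')
    (hgap : ∀ u ∈ S, (L u).IsChain fun x y => Arc x (c x y) ∧ Arc (c x y) y) :
    ∀ {us : List V} {v : V}, (∀ u ∈ us, u ∈ S) → v ∈ S → (us ++ [v]).IsChain (· ≠ ·) →
      (hubWalk c L us ++ [v]).IsChain Arc
  | [], v, _, _, _ => isChain_singleton v
  | u :: us, v, hus, hv, hdist => by
    rw [cons_append, isChain_cons] at hdist
    have huS := hus u mem_cons_self
    have ih := isChain_hubWalk_append hne hout hback hgap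
      (fun w hw => hus w (mem_cons_of_mem u hw)) hv hdist.2
    rw [hubWalk, flatMap_cons, append_assoc, ← hubWalk, isChain_append]
    refine ⟨isChain_cons.2 ⟨fun x hx => ?_, isChain_interpose c (hgap u huS)⟩, ih, ?_⟩
    · rw [head?_interpose] at hx
      exact hout u huS x (mem_of_mem_head? hx)
    · intro x hx y hy
      rw [getLast?_cons, getLast?_interpose, getLast?_eq_some_getLast (hne u huS), Option.getD_some,
        Option.mem_some_iff] at hx
      rw [head?_hubWalk_append] at hy
      have hyS : y ∈ S := by
        rcases mem_append.1 (mem_of_mem_head? hy) with hy' | hy'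
        · exact hus y (mem_cons_of_mem u hy')
        · exact (mem_singleton.1 hy') ▸ hv
      exact hback u huS x (hx ▸ getLast_mem _) y hyS (hdist.1 y hy)

theorem isClosedWalk_hubWalk {S : Set V} (hne : ∀ u ∈ S, L u ≠ [])
    (hout : ∀ u ∈ S, ∀ x ∈ L u, Arc u x)
    (hback : ∀ u ∈ S, ∀ x ∈ L u, ∀ u' ∈ S, u ≠ u' → Arc x u')
    (hgap : ∀ u ∈ S, (L u).IsChain fun x y => Arc x (c x y) ∧ Arc (c x y) y)
    {us : List V} (hus : ∀ u ∈ us, u ∈ S) (hnd : us.Nodup) (hlen : 1 < us.length) :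
    IsClosedWalk Arc (hubWalk c L us) := by
  obtain ⟨u, rest, rfl⟩ := exists_cons_of_length_pos (by omega : 0 < us.length)
  obtain ⟨u', rest', rfl⟩ := exists_cons_of_length_pos (by simpa using hlen : 0 < rest.length)
  have hdist : (u :: u' :: rest' ++ [u]).IsChain (· ≠ ·) := by
    have hperm : (u' :: rest' ++ [u]).Perm (u :: u' :: rest') := perm_append_singleton _ _
    rw [cons_append, cons_append, isChain_cons_cons]
    exact ⟨(nodup_cons.1 hnd).1 ∘ (· ▸ mem_cons_self), (hperm.nodup_iff.2 hnd).isChain⟩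
  have hchain := isChain_append.1
    (isChain_hubWalk_append c L hne hout hback hgap hus (hus u mem_cons_self) hdist)
  refine ⟨by simp [hubWalk], hchain.1, Or.inr fun a b ha hb => ?_⟩
  simp only [hubWalk, flatMap_cons, cons_append, head?_cons, Option.some.injEq] at ha
  exact hchain.2.2 b hb a (ha ▸ rfl)

end HubWalk

namespace IsCMPOrientation

variable {ι : Type*} {Arc : V → V → Prop} {P : V → ι}

theorem not_arc_of_arc (hor : IsCMPOrientation Arc P) {u v : V} (h : Arc u v) : ¬ Arc v u :=
  (hor.2 u v (hor.1 u v h)).1 h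

theorem arc_of_not_arc (hor : IsCMPOrientation Arc P) {u v : V} (hP : P u ≠ P v)
    (h : ¬ Arc v u) : Arc u v :=
  (hor.2 u v hP).2 h

theorem exists_arc_arc (hor : IsCMPOrientation Arc P) {x y : V} (hxy : P x = P y)
    (h : ¬ ∀ b, Arc b y → Arc b x) : ∃ b, Arc x b ∧ Arc b y := by
  push Not at h
  obtain ⟨b, hby, hbx⟩ := h
  exact ⟨b, hor.arc_of_not_arc (hxy ▸ (hor.1 b y hby).symm) hbx, hby⟩

theorem arc_of_forall_arc_imp (hor : IsCMPOrientation Arc P) {x w v : V} (hxw : P x = P w)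
    (hsub : ∀ b, Arc b x → Arc b w) (hwv : Arc w v) : Arc x v :=
  hor.arc_of_not_arc (hxw ▸ hor.1 w v hwv) fun hvx => hor.not_arc_of_arc hwv (hsub v hvx)

end IsCMPOrientation

section Bipartite

variable {Arc : V → V → Prop} {P : V → Bool} {U : Set V} {f : V → V}

theorem arc_of_ne_dominator (hor : IsCMPOrientation Arc P) (hU : U ⊆ {v | P v = false})
    (hfuniq : ∀ a, P a = true → ∀ u, u ∈ U ∧ Arc u a → u = f a)
    {a u : V} (ha : P a = true) (hu : u ∈ U) (hua : u ≠ f a) : Arc a u :=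
  have hPu : P u = false := hU hu
  hor.arc_of_not_arc (by simp [ha, hPu]) fun h => hua (hfuniq a ha u ⟨hu, h⟩)

theorem one_lt_card_image_dominator [DecidableEq V] (hor : IsCMPOrientation Arc P)
    (hin : ∀ v, ∃ u, Arc u v) (hU : U ⊆ {v | P v = false})
    (hf : ∀ a, P a = true → f a ∈ U ∧ Arc (f a) a) {R : Finset V} (hRA : ∀ x ∈ R, P x = true)
    (hR : R.Nonempty) (hcover : ∀ w, P w = true → ∃ x ∈ R, f x = f w) :
    1 < (R.image f).card := by
  obtain ⟨x, hx⟩ := hR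
  obtain ⟨w, hw⟩ := hin (f x)
  have hPfx : P (f x) = false := hU (hf x (hRA x hx)).1
  have hPw : P w = true := by simpa [hPfx] using hor.1 w (f x) hw
  obtain ⟨y, hy, hyw⟩ := hcover w hPw
  refine Finset.one_lt_card.2 ⟨f x, Finset.mem_image_of_mem f hx, f y,
    Finset.mem_image_of_mem f hy, fun hxy => hor.not_arc_of_arc hw ?_⟩
  rw [hxy, hyw]
  exact (hf w hPw).2

theorem dom_of_covering (hor : IsCMPOrientation Arc P) (hin : ∀ v, ∃ u, Arc u v)
    (hf : ∀ a, P a = true → Arc (f a) a) {R : Finset V} (hRA : ∀ x ∈ R, P x = true)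
    (hcover : ∀ w, P w = true → ∃ x ∈ R, f x = f w ∧ ∀ b, Arc b x → Arc b w)
    {W : Set V} (hRW : ∀ x ∈ R, x ∈ W) (hfW : ∀ x ∈ R, f x ∈ W) : Dom Arc W := by
  intro v
  right
  cases hv : P v
  · obtain ⟨w, hw⟩ := hin v
    have hPw : P w = true := by simpa [hv] using hor.1 w v hw
    obtain ⟨x, hx, -, hsub⟩ := hcover w hPw
    exact ⟨x, hRW x hx, hor.arc_of_forall_arc_imp ((hRA x hx).trans hPw.symm) hsub hw⟩
  · obtain ⟨x, hx, hfx, -⟩ := hcover v hv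
    exact ⟨f v, hfx ▸ hfW x hx, hf v hv⟩

open Finset in
theorem exists_isCDW_length_eq_of_covering [DecidableEq V] (hor : IsCMPOrientation Arc P)
    (hin : ∀ v, ∃ u, Arc u v) (hU : U ⊆ {v | P v = false})
    (hf : ∀ a, P a = true → f a ∈ U ∧ Arc (f a) a)
    (hfuniq : ∀ a, P a = true → ∀ u, u ∈ U ∧ Arc u a → u = f a)
    {R : Finset V} (hRA : ∀ x ∈ R, P x = true) (hR : R.Nonempty)
    (hcover : ∀ w, P w = true → ∃ x ∈ R, f x = f w ∧ ∀ b, Arc b x → Arc b w)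
    (hanti : IsAntichain (fun x w => f x = f w ∧ ∀ b, Arc b x → Arc b w) (R : Set V)) :
    ∃ l, IsCDW Arc l ∧ l.length = 2 * #R := by
  have : Nonempty V := ⟨hR.choose⟩
  have hgap : ∀ x ∈ R, ∀ y ∈ R, x ≠ y → f x = f y → ∃ b, Arc x b ∧ Arc b y :=
    fun x hx y hy hxy hfxy => hor.exists_arc_arc ((hRA x hx).trans (hRA y hy).symm)
      fun h => hanti hy hx hxy.symm ⟨hfxy.symm, h⟩
  choose! c hc using hgap
  set L : V → List V := fun u => {x ∈ R | f x = u}.toList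
  have hL : ∀ {u x}, x ∈ L u ↔ x ∈ R ∧ f x = u := by simp [L]
  have hne : ∀ u ∈ (R.image f : Set V), L u ≠ [] := by
    intro u hu
    obtain ⟨x, hx, rfl⟩ := mem_image.1 hu
    exact List.ne_nil_of_mem (hL.2 ⟨hx, rfl⟩)
  refine ⟨hubWalk c L (R.image f).toList, ⟨isClosedWalk_hubWalk c L hne ?_ ?_ ?_
    (fun u hu => mem_toList.1 hu) (nodup_toList _) ?_, ?_⟩, ?_⟩
  · intro u _ x hx
    obtain ⟨hxR, rfl⟩ := hL.1 hx
    exact (hf x (hRA x hxR)).2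
  · intro u hu x hx u' hu' huu'
    obtain ⟨hxR, rfl⟩ := hL.1 hx
    obtain ⟨y, hy, rfl⟩ := mem_image.1 hu'
    exact arc_of_ne_dominator hor hU hfuniq (hRA x hxR) (hf y (hRA y hy)).1 (Ne.symm huu')
  · intro u _
    refine List.Pairwise.isChain ((nodup_toList _).imp_of_mem fun hx hy hxy => ?_)
    obtain ⟨hxR, hfx⟩ := hL.1 hx
    obtain ⟨hyR, hfy⟩ := hL.1 hy
    exact hc _ hxR _ hyR hxy (hfx.trans hfy.symm)
  · rw [length_toList]
    exact one_lt_card_image_dominator hor hin hU hf hRA hR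
      fun w hw => (hcover w hw).imp fun x hx => ⟨hx.1, hx.2.1⟩
  · exact dom_of_covering hor hin (fun a ha => (hf a ha).2) hRA hcover
      (fun x hx => mem_hubWalk_of_mem c L (mem_toList.2 (mem_image_of_mem f hx)) (hL.2 ⟨hx, rfl⟩))
      fun x hx => mem_hubWalk c L (mem_toList.2 (mem_image_of_mem f hx))
  · rw [length_hubWalk c L fun u hu => hne u (mem_toList.1 hu), sum_map_toList,
      card_eq_sum_card_image f R]
    simp [L]

end Bipartite

theorem walkLength_le_length (l : List V) : walkLength l ≤ l.length := by
  unfold walkLength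
  split_ifs <;> omega

theorem stmt4_general [Fintype V] [Nonempty V] (Arc : V → V → Prop) (P : V → Bool)
    (hor : IsCMPOrientation Arc P)
    (hin : ∀ v, ∃ u, Arc u v)
    (U : Set V) (hU : U ⊆ {v | P v = false})
    (hdom : ∀ a ∈ ({v | P v = true} : Set V), ∃! u, u ∈ U ∧ Arc u a) :
    ∃ l, IsCDW Arc l ∧ walkLength l ≤ 2 * ({v | P v = true} : Set V).ncard := by
  classical
  choose! f hf hfuniq using hdom
  obtain ⟨R, hRA, hcover, hanti⟩ := Finset.exists_subset_isAntichain_covering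
    (r := fun x w => f x = f w ∧ ∀ b, Arc b x → Arc b w) (fun _ => ⟨rfl, fun _ => id⟩)
    (fun _ _ _ hxy hyz => ⟨hxy.1.trans hyz.1, fun b hb => hyz.2 b (hxy.2 b hb)⟩)
    {a | P a = true}
  have hA : ∃ a, P a = true := by
    obtain ⟨u, hu⟩ := hin (Classical.arbitrary V)
    cases hPu : P u
    · exact ⟨_, by simpa [hPu] using (hor.1 u _ hu).symm⟩
    · exact ⟨u, hPu⟩
  obtain ⟨a, ha⟩ := hA
  obtain ⟨x, hx, -⟩ := hcover a (by simpa using ha)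
  obtain ⟨l, hl, hlen⟩ := exists_isCDW_length_eq_of_covering hor hin hU hf hfuniq
    (fun x hx => by simpa using hRA hx) ⟨x, hx⟩ (fun w hw => hcover w (by simpa using hw)) hanti
  refine ⟨l, hl, ?_⟩
  calc walkLength l ≤ l.length := walkLength_le_length l
    _ = 2 * R.card := hlen
    _ ≤ 2 * ({v | P v = true} : Finset V).card := by gcongr
    _ = 2 * ({v | P v = true} : Set V).ncard := by rw [← Set.ncard_coe_finset]; simp

theorem stmt4 [Fintype V] [Nonempty V] (Arc : V → V → Prop) (P : V → Bool)
    (hor : IsCMPOrientation Arc P)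
    (hcard : ({v | P v = true} : Set V).ncard ≤ ({v | P v = false} : Set V).ncard)
    (hin : ∀ v, ∃ u, Arc u v)
    (U : Set V) (hU : U ⊆ {v | P v = false})
    (hdom : ∀ a ∈ ({v | P v = true} : Set V), ∃! u, u ∈ U ∧ Arc u a) :
    ∃ l, IsCDW Arc l ∧ walkLength l ≤ 2 * ({v | P v = true} : Set V).ncard :=
  stmt4_general Arc P hor hin U hU hdom
end

section
/- Let T be a tournament of order n that is not strongly connected with γ(T) = k ≥ 3. Then there exists a tournament T_s of order n+1 containing T as a subtournament such that T_s is strongly connected and γ(T_s) = k. (Construction: take a Hamilton path of T starting at u, add a new vertex w with arcs from all vertices except u to w and the arc (w,u).) -/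
variable {V : Type*}

/-!
A tournament has a vertex `u` from which every vertex is reachable (the start of a Hamilton
path). Add a vertex `w` (here `none : Option V`) receiving an arc from every old vertex except
`u`, and the arc `w → u`. Every vertex then reaches `w` (the vertex `u` via some other vertex),
and `w` reaches everything through `u`, so the extension is strong. A dominating set of the old
tournament with at least two vertices contains a vertex other than `u` and hence also dominates
`w`; conversely, replacing `w` by `u` in a dominating set of the extension gives a dominating set
of the old tournament that is no larger.
-/

theorem IsTournament.reflTransGen_total {A : V → V → Prop} (hT : IsTournament A) (a b : V) :
    Relation.ReflTransGen A a b ∨ Relation.ReflTransGen A b a := by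
  by_cases hab : a = b
  · exact Or.inl (hab ▸ Relation.ReflTransGen.refl)
  by_cases h : A a b
  · exact Or.inl (.single h)
  · exact Or.inr (.single ((hT.2 b a (Ne.symm hab)).mpr h))

theorem exists_forall_reflTransGen_of_total [Finite V] [Nonempty V] {R : V → V → Prop}
    (htot : ∀ a b, Relation.ReflTransGen R a b ∨ Relation.ReflTransGen R b a) :
    ∃ u, ∀ v, Relation.ReflTransGen R u v := by
  obtain ⟨u, hu⟩ := Finite.exists_max fun u => {v | Relation.ReflTransGen R u v}.ncard
  refine ⟨u, fun v => by_contra fun huv => (hu v).not_gt (Set.ncard_lt_ncard ?_)⟩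
  have hvu := (htot u v).resolve_left huv
  exact Set.ssubset_iff_of_subset (fun x hx => hvu.trans hx) |>.mpr ⟨v, .refl, huv⟩

theorem domNum_le {A : V → V → Prop} {S : Set V} (hS : Dom A S) : domNum A ≤ S.ncard :=
  Nat.sInf_le ⟨S, rfl, hS⟩

theorem exists_dom_ncard_eq_domNum (A : V → V → Prop) :
    ∃ S, Dom A S ∧ S.ncard = domNum A := by
  obtain ⟨S, hcard, hS⟩ := Nat.sInf_mem (⟨_, Set.univ, rfl, fun _ => .inl trivial⟩ :
    {n | ∃ S : Set V, S.ncard = n ∧ Dom A S}.Nonempty)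
  exact ⟨S, hS, hcard⟩

theorem domNum_le_card (A : V → V → Prop) : domNum A ≤ Nat.card V :=
  Set.ncard_univ V ▸ domNum_le fun _ => .inl trivial

def extendTournament (A : V → V → Prop) (u : V) : Option V → Option V → Prop
  | some a, some b => A a b
  | some a, none => a ≠ u
  | none, some b => b = u
  | none, none => False

section extendTournament

variable {A : V → V → Prop} {u : V}

theorem IsTournament.extendTournament (hT : IsTournament A) (u : V) :
    IsTournament (extendTournament A u) := by
  refine ⟨fun x => ?_, fun x y hxy => ?_⟩
  · cases x with
    | none => exact id
    | some a => exact hT.1 a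
  · cases x <;> cases y
    · exact absurd rfl hxy
    · exact not_not.symm
    · exact Iff.rfl
    · exact hT.2 _ _ fun h => hxy (congrArg some h)

theorem reflTransGen_extendTournament_some {a b : V} (h : Relation.ReflTransGen A a b) :
    Relation.ReflTransGen (extendTournament A u) (some a) (some b) :=
  h.lift some fun _ _ hab => hab

theorem reflTransGen_extendTournament (hu : ∀ v, Relation.ReflTransGen A u v) {v : V}
    (hv : v ≠ u) (x y : Option V) : Relation.ReflTransGen (extendTournament A u) x y := by
  have to_new : ∀ x, Relation.ReflTransGen (extendTournament A u) x none := by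
    rintro (_ | a)
    · exact .refl
    · by_cases ha : a = u
      · exact ha ▸ (reflTransGen_extendTournament_some (hu v)).tail
          (show extendTournament A u (some v) none from hv)
      · exact .single ha
  have from_new : ∀ y, Relation.ReflTransGen (extendTournament A u) none y := by
    rintro (_ | b)
    · exact .refl
    · exact .head (show extendTournament A u none (some u) from rfl)
        (reflTransGen_extendTournament_some (hu b))
  exact (to_new x).trans (from_new y)

theorem Dom.image_some_extendTournament {S : Set V} (hS : Dom A S) {v : V} (hvS : v ∈ S)
    (hvu : v ≠ u) : Dom (extendTournament A u) (some '' S) := by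
  rintro (_ | w)
  · exact .inr ⟨some v, Set.mem_image_of_mem _ hvS, hvu⟩
  · rcases hS w with hw | ⟨y, hy, hyw⟩
    · exact .inl (Set.mem_image_of_mem _ hw)
    · exact .inr ⟨some y, Set.mem_image_of_mem _ hy, hyw⟩

theorem Dom.image_getD_of_extendTournament {S : Set (Option V)}
    (hS : Dom (extendTournament A u) S) : Dom A ((·.getD u) '' S) := by
  intro w
  rcases hS (some w) with hw | ⟨_ | y, hy, hyw⟩
  · exact .inl ⟨some w, hw, rfl⟩
  · exact .inl ⟨none, hy, hyw.symm⟩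
  · exact .inr ⟨y, ⟨some y, hy, rfl⟩, hyw⟩

theorem domNum_extendTournament [Finite V] (h : 2 ≤ domNum A) :
    domNum (extendTournament A u) = domNum A := by
  apply le_antisymm
  · obtain ⟨S, hS, hcard⟩ := exists_dom_ncard_eq_domNum A
    have hSu : ¬ S ⊆ {u} := fun hsub => by
      have := Set.ncard_le_ncard hsub
      rw [Set.ncard_singleton] at this
      omega
    obtain ⟨v, hvS, hvu⟩ := Set.not_subset.mp hSu
    calc domNum (extendTournament A u) ≤ (some '' S).ncard :=
          domNum_le (hS.image_some_extendTournament hvS hvu)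
      _ = domNum A := by rw [Set.ncard_image_of_injective S (Option.some_injective V), hcard]
  · obtain ⟨S, hS, hcard⟩ := exists_dom_ncard_eq_domNum (extendTournament A u)
    calc domNum A ≤ ((·.getD u) '' S).ncard := domNum_le hS.image_getD_of_extendTournament
      _ ≤ S.ncard := Set.ncard_image_le
      _ = domNum (extendTournament A u) := hcard

end extendTournament

theorem stmt17_general [Fintype V] (A : V → V → Prop) (hT : IsTournament A)
    (k : ℕ) (hk : 3 ≤ k) (hγ : domNum A = k) :
    ∃ A' : Option V → Option V → Prop, IsTournament A' ∧
      (∀ u v : V, A' (some u) (some v) ↔ A u v) ∧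
      (∀ u v : Option V, Relation.ReflTransGen A' u v) ∧
      domNum A' = k := by
  have : Nontrivial V := Finite.one_lt_card_iff_nontrivial.mp <| by
    have := domNum_le_card A
    omega
  obtain ⟨u, hu⟩ := exists_forall_reflTransGen_of_total hT.reflTransGen_total
  obtain ⟨v, hv⟩ := exists_ne u
  exact ⟨extendTournament A u, hT.extendTournament u, fun _ _ => Iff.rfl,
    reflTransGen_extendTournament hu hv, hγ ▸ domNum_extendTournament (by omega)⟩

theorem stmt17 [Fintype V] (A : V → V → Prop) (hT : IsTournament A)
    (hns : ¬ ∀ u v : V, Relation.ReflTransGen A u v)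
    (k : ℕ) (hk : 3 ≤ k) (hγ : domNum A = k) :
    ∃ A' : Option V → Option V → Prop, IsTournament A' ∧
      (∀ u v : V, A' (some u) (some v) ↔ A u v) ∧
      (∀ u v : Option V, Relation.ReflTransGen A' u v) ∧
      domNum A' = k :=
  stmt17_general A hT k hk hγ
end

section
/- If T is a locally-out-transitive tournament (the out-neighbourhood of every vertex induces a transitive subtournament) with γ(T) > 1, then γ(T) ≤ 3 and w(T) ≤ 3. -/
/-!
A tournament without directed triangles has a vertex of maximum out-degree that beats every
other vertex, so `γ(T) > 1` forces a directed triangle `x → y → z → x`. In a locally-out-transitive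
tournament every directed triangle dominates: a vertex beating all of `x, y, z` would see the path
`x → y → z` inside its transitive out-neighbourhood, forcing `x → z`. The triangle is therefore both
a dominating set of size at most 3 and a closed dominating walk of length 3.
-/

variable {V : Type*}

section
variable {A : V → V → Prop}

lemma domNum_le_ncard {S : Set V} (hS : Dom A S) : domNum A ≤ S.ncard :=
  Nat.sInf_le ⟨S, rfl, hS⟩

lemma watchman_le_walkLength {l : List V} (hl : IsCDW A l) : watchman A ≤ walkLength l :=
  Nat.sInf_le ⟨l, hl, rfl⟩

lemma isCDW_triangle {x y z : V} (hxy : A x y) (hyz : A y z) (hzx : A z x)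
    (hdom : Dom A {x, y, z}) : IsCDW A [x, y, z] := by
  refine ⟨⟨List.cons_ne_nil _ _, ?_, Or.inr ?_⟩, ?_⟩
  · exact .cons_cons hxy (.cons_cons hyz (.singleton z))
  · rintro a b ⟨⟩ ⟨⟩
    exact hzx
  · convert hdom using 1
    ext
    simp

namespace IsTournament

variable (hT : IsTournament A)
include hT

lemma outNbrs_ssubset_of_triangleFree (hfree : ∀ x y z, A x y → A y z → ¬ A z x)
    {u v : V} (huv : A u v) : {w | A v w} ⊂ {w | A u w} := by
  refine Set.ssubset_iff_of_subset (fun w hvw => ?_) |>.mpr ⟨v, huv, hT.1 v⟩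
  by_contra huw
  have hwu : w ≠ u := by
    rintro rfl
    exact (hT.2 w v fun h => hT.1 w (h ▸ huv)).mp huv hvw
  exact hfree u v w huv hvw ((hT.2 w u hwu).mpr huw)

lemma exists_dom_singleton_of_triangleFree [Finite V] [Nonempty V]
    (hfree : ∀ x y z, A x y → A y z → ¬ A z x) : ∃ m, Dom A {m} := by
  obtain ⟨m, hm⟩ := Finite.exists_max fun v => {w | A v w}.ncard
  refine ⟨m, fun v => (em (v = m)).imp id fun hvm => ⟨m, rfl, ?_⟩⟩
  by_contra hmv
  have hlt := Set.ncard_lt_ncard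
    (hT.outNbrs_ssubset_of_triangleFree hfree ((hT.2 v m hvm).mpr hmv)) (Set.toFinite _)
  exact (hm v).not_gt hlt

lemma exists_triangle_of_one_lt_domNum [Finite V] (hγ : 1 < domNum A) :
    ∃ x y z, A x y ∧ A y z ∧ A z x := by
  by_contra! hfree
  rcases isEmpty_or_nonempty V with hV | hV
  · have := domNum_le_ncard (A := A) (S := ∅) fun v => (IsEmpty.false v).elim
    simp at this
    omega
  · obtain ⟨m, hm⟩ := hT.exists_dom_singleton_of_triangleFree hfree
    have := domNum_le_ncard hm
    rw [Set.ncard_singleton] at this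
    omega

lemma dom_triangle (hlot : ∀ v a b c : V, A v a → A v b → A v c → A a b → A b c → A a c)
    {x y z : V} (hxy : A x y) (hyz : A y z) (hzx : A z x) : Dom A {x, y, z} := by
  intro v
  by_contra! hv
  obtain ⟨hvS, hnot⟩ := hv
  simp only [Set.mem_insert_iff, Set.mem_singleton_iff, not_or] at hvS
  obtain ⟨hvx, hvy, hvz⟩ := hvS
  have hxz : A x z := hlot v x y z ((hT.2 v x hvx).mpr (hnot x (by simp)))
    ((hT.2 v y hvy).mpr (hnot y (by simp))) ((hT.2 v z hvz).mpr (hnot z (by simp))) hxy hyz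
  exact (hT.2 x z fun h => hT.1 x (h ▸ hzx)).mp hxz hzx

end IsTournament

end

lemma ncard_triple_le_three (x y z : V) : ({x, y, z} : Set V).ncard ≤ 3 := by
  classical
  rw [← Finset.coe_singleton, ← Finset.coe_insert, ← Finset.coe_insert, Set.ncard_coe_finset]
  exact Finset.card_le_three

theorem stmt18 [Fintype V] (A : V → V → Prop) (hT : IsTournament A)
    (hlot : ∀ v a b c : V, A v a → A v b → A v c → A a b → A b c → A a c)
    (hγ : 1 < domNum A) :
    domNum A ≤ 3 ∧ watchman A ≤ 3 := by
  obtain ⟨x, y, z, hxy, hyz, hzx⟩ := hT.exists_triangle_of_one_lt_domNum hγ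
  have hdom := hT.dom_triangle hlot hxy hyz hzx
  exact ⟨(domNum_le_ncard hdom).trans (ncard_triple_le_three x y z),
    (watchman_le_walkLength (isCDW_triangle hxy hyz hzx hdom)).trans (by simp [walkLength])⟩
end
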